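/- (Cotlar–Stein Lemma) Let H be a Hilbert space and (T_j)_{j∈N} bounded operators on H. Suppose A := sup_j Σ_k √‖T_j T_k^*‖ < ∞ and B := sup_j Σ_k √‖T_j^* T_k‖ < ∞. Then Σ_j T_j converges in the strong operator topology and ‖Σ_j T_j‖ ≤ √(AB). -/

import Mathlib

/-!
Expanding `(S S*)^m` for a finite partial sum `S = ∑ T_j` gives a sum over words
`T_{j₁} T_{k₁}* ⋯ T_{jₘ} T_{kₘ}*`. The geometric mean of the two ways of grouping a word into
adjacent pairs bounds its norm by `√‖T_{j₁}‖ · √‖T_{j₁} T_{k₁}*‖ · √‖T_{k₁}* T_{j₂}‖ ⋯ √‖T_{kₘ}‖`,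
and summing out the indices one at a time gives `‖S‖^{2m} ≤ card · (AB)^m`; letting `m → ∞`
yields `‖S‖ ≤ √(AB)` for every partial sum. The series converges on each vector `T_k* y`, whose
terms are dominated by `A √‖T_k T_j*‖ ‖y‖`. The uniform bound makes the set where it converges a
closed subspace; its orthogonal complement is annihilated by every `T_k`, so it is everything.
-/

open Finset

section WordBound

variable {R : Type*} [SeminormedRing R]

def normPairing : R → List R → ℝ
  | x, [] => ‖x‖
  | x, [y] => ‖x * y‖
  | x, y :: z :: l => ‖x * y‖ * normPairing z l

noncomputable def sqrtNormChain : R → List R → ℝ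
  | x, [] => √‖x‖
  | x, y :: l => √‖x * y‖ * sqrtNormChain y l

theorem norm_prod_cons_le_normPairing (x : R) (l : List R) :
    ‖(x :: l).prod‖ ≤ normPairing x l := by
  induction x, l using normPairing.induct with
  | case1 x => simp [normPairing]
  | case2 x y => simp [normPairing]
  | case3 x y z l ih =>
    rw [List.prod_cons, List.prod_cons, ← mul_assoc, normPairing]
    exact (norm_mul_le _ _).trans (mul_le_mul_of_nonneg_left ih (norm_nonneg _))

theorem sqrtNormChain_nonneg (x : R) (l : List R) : 0 ≤ sqrtNormChain x l := by
  induction l generalizing x with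
  | nil => exact Real.sqrt_nonneg _
  | cons y l ih => exact mul_nonneg (Real.sqrt_nonneg _) (ih y)

theorem sqrtNormChain_cons_sq (x y : R) (l : List R) :
    sqrtNormChain x (y :: l) ^ 2 = normPairing x (y :: l) * normPairing y l := by
  induction l generalizing x y with
  | nil => simp [sqrtNormChain, normPairing, mul_pow]
  | cons z l ih =>
    rw [sqrtNormChain, mul_pow, ih, Real.sq_sqrt (norm_nonneg _), normPairing]
    ring

-- The geometric mean of the groupings `(x x₁)(x₂ x₃)⋯` and `x (x₁ x₂)(x₃ x₄)⋯`.
theorem norm_prod_cons_le (x : R) (l : List R) :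
    ‖(x :: l).prod‖ ≤ √‖x‖ * sqrtNormChain x l := by
  cases l with
  | nil => simp [sqrtNormChain]
  | cons y l =>
    have hpair := norm_prod_cons_le_normPairing x (y :: l)
    have hsplit : ‖(x :: y :: l).prod‖ ≤ ‖x‖ * normPairing y l :=
      (norm_mul_le _ _).trans
        (mul_le_mul_of_nonneg_left (norm_prod_cons_le_normPairing y l) (norm_nonneg _))
    have hsq : ‖(x :: y :: l).prod‖ ^ 2 ≤ (√‖x‖ * sqrtNormChain x (y :: l)) ^ 2 := by
      rw [mul_pow, Real.sq_sqrt (norm_nonneg _), sqrtNormChain_cons_sq, sq]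
      calc _ ≤ normPairing x (y :: l) * (‖x‖ * normPairing y l) :=
            mul_le_mul hpair hsplit (norm_nonneg _) ((norm_nonneg _).trans hpair)
        _ = _ := by ring
    exact (pow_le_pow_iff_left₀ (norm_nonneg _)
        (mul_nonneg (Real.sqrt_nonneg _) (sqrtNormChain_nonneg _ _)) two_ne_zero).1 hsq

end WordBound

theorem Fintype.sum_fun_fin_succ {ι M : Type*} [Fintype ι] [AddCommMonoid M] {n : ℕ}
    (g : (Fin (n + 1) → ι) → M) :
    ∑ w, g w = ∑ j, ∑ w : Fin n → ι, g (Fin.cons j w) := by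
  rw [← (Fin.consEquiv fun _ => ι).sum_comp, Fintype.sum_prod_type]
  rfl

theorem List.prod_ofFn_sum {R ι : Type*} [Semiring R] [Fintype ι] (U : ℕ → ι → R) (n : ℕ) :
    (List.ofFn fun i : Fin n => ∑ j, U i j).prod
      = ∑ w : Fin n → ι, (List.ofFn fun i => U i (w i)).prod := by
  induction n generalizing U with
  | zero => simp
  | succ n ih =>
    rw [List.ofFn_succ, List.prod_cons, Fintype.sum_fun_fin_succ]
    simp only [Fin.val_succ, ih fun i => U (i + 1), Finset.sum_mul_sum, List.ofFn_succ,
      List.prod_cons, Fin.cons_zero, Fin.cons_succ, Fin.val_zero]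

section WordSum

variable {R ι : Type*} [SeminormedRing R] [Fintype ι] {U : ℕ → ι → R} {M : ℝ} {K : ℕ → ℝ}

theorem sum_sqrtNormChain_le (hM : ∀ i j, ‖U i j‖ ≤ M)
    (hK : ∀ i j, ∑ k, √‖U i j * U (i + 1) k‖ ≤ K i) (hK₀ : ∀ i, 0 ≤ K i) (n : ℕ) (j : ι) :
    ∑ w : Fin n → ι, sqrtNormChain (U 0 j) (List.ofFn fun i => U (i + 1) (w i))
      ≤ √M * ∏ i ∈ range n, K i := by
  induction n generalizing U K j with
  | zero => simpa [sqrtNormChain] using Real.sqrt_le_sqrt (hM 0 j)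
  | succ n ih =>
    have htail := fun k => ih (U := fun i => U (i + 1)) (K := fun i => K (i + 1))
      (fun i => hM _) (fun i => hK _) (fun i => hK₀ _) k
    simp only [zero_add] at htail
    rw [Fintype.sum_fun_fin_succ, prod_range_succ']
    calc _ = ∑ k, √‖U 0 j * U 1 k‖ * ∑ w : Fin n → ι,
            sqrtNormChain (U 1 k) (List.ofFn fun i => U (i + 1 + 1) (w i)) := by
          simp only [List.ofFn_succ, Fin.cons_zero, Fin.cons_succ, Fin.val_succ, Fin.val_zero,
            sqrtNormChain, Finset.mul_sum, zero_add]
      _ ≤ ∑ k, √‖U 0 j * U 1 k‖ * (√M * ∏ i ∈ range n, K (i + 1)) :=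
          sum_le_sum fun k _ => mul_le_mul_of_nonneg_left (htail k) (Real.sqrt_nonneg _)
      _ ≤ K 0 * (√M * ∏ i ∈ range n, K (i + 1)) := by
          rw [← Finset.sum_mul]
          exact mul_le_mul_of_nonneg_right (hK 0 j)
            (mul_nonneg (Real.sqrt_nonneg _) (prod_nonneg fun i _ => hK₀ _))
      _ = √M * ((∏ i ∈ range n, K (i + 1)) * K 0) := by ring

theorem norm_prod_ofFn_sum_le (hM : ∀ i j, ‖U i j‖ ≤ M)
    (hK : ∀ i j, ∑ k, √‖U i j * U (i + 1) k‖ ≤ K i) (hK₀ : ∀ i, 0 ≤ K i) (n : ℕ) :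
    ‖(List.ofFn fun i : Fin (n + 1) => ∑ j, U i j).prod‖
      ≤ Fintype.card ι * (M * ∏ i ∈ range n, K i) := by
  rw [List.prod_ofFn_sum, Fintype.sum_fun_fin_succ, ← nsmul_eq_mul, ← Finset.card_univ]
  refine (norm_sum_le _ _).trans (sum_le_card_nsmul _ _ _ fun j _ => ?_)
  have hM₀ : 0 ≤ M := (norm_nonneg _).trans (hM 0 j)
  calc _ ≤ ∑ w : Fin n → ι,
          √‖U 0 j‖ * sqrtNormChain (U 0 j) (List.ofFn fun i => U (i + 1) (w i)) :=
        (norm_sum_le _ _).trans (sum_le_sum fun w _ => by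
          simpa [List.ofFn_succ] using norm_prod_cons_le (U 0 j) _)
    _ ≤ √M * (√M * ∏ i ∈ range n, K i) := by
        rw [← Finset.mul_sum]
        exact mul_le_mul (Real.sqrt_le_sqrt (hM 0 j)) (sum_sqrtNormChain_le hM hK hK₀ n j)
          (sum_nonneg fun w _ => sqrtNormChain_nonneg _ _) (Real.sqrt_nonneg _)
    _ = M * ∏ i ∈ range n, K i := by rw [← mul_assoc, Real.mul_self_sqrt hM₀]

end WordSum

theorem List.prod_ofFn_ite_even {M : Type*} [Monoid M] (x y : M) (m : ℕ) :
    (List.ofFn fun i : Fin (2 * m) => if Even (i : ℕ) then x else y).prod = (x * y) ^ m := by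
  rw [List.ofFn_mul', List.prod_flatten]
  simp [List.ofFn_succ]

theorem Finset.prod_range_ite_even {M : Type*} [CommMonoid M] (a b : M) (m : ℕ) :
    ∏ i ∈ range (2 * m + 1), (if Even i then a else b) = a ^ (m + 1) * b ^ m := by
  induction m with
  | zero => simp
  | succ m ih =>
    rw [show 2 * (m + 1) + 1 = 2 * m + 1 + 1 + 1 by ring, prod_range_succ, prod_range_succ, ih]
    simp [Nat.even_add_one, pow_succ]
    ac_rfl

theorem le_of_forall_pow_two_pow_le_mul_pow {x y C : ℝ} (hy : 0 ≤ y)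
    (h : ∀ n : ℕ, x ^ 2 ^ n ≤ C * y ^ 2 ^ n) : x ≤ y := by
  by_contra! hyx
  rcases hy.eq_or_lt with rfl | hy
  · have h0 := h 0
    norm_num at h0
    linarith
  have hratio : ∀ n : ℕ, (x / y) ^ 2 ^ n ≤ C := fun n => by
    rw [div_pow, div_le_iff₀ (pow_pos hy _)]
    exact h n
  have hunbounded : Filter.Tendsto (fun n : ℕ => (x / y) ^ 2 ^ n) Filter.atTop Filter.atTop :=
    (tendsto_pow_atTop_atTop_of_one_lt ((one_lt_div hy).2 hyx)).comp
      (tendsto_pow_atTop_atTop_of_one_lt one_lt_two)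
  obtain ⟨n, hn⟩ := (hunbounded.eventually_gt_atTop C).exists
  exact (hratio n).not_gt hn

section CStarRing

variable {E ι : Type*} [NormedRing E] [StarRing E] [CStarRing E] [Fintype ι] {a : ι → E} {A B : ℝ}

theorem norm_sum_mul_star_pow_le (hA : ∀ j, ∑ k, √‖a j * star (a k)‖ ≤ A)
    (hB : ∀ j, ∑ k, √‖star (a j) * a k‖ ≤ B) (hA₀ : 0 ≤ A) (hB₀ : 0 ≤ B) (m : ℕ) :
    ‖((∑ j, a j) * star (∑ j, a j)) ^ (m + 1)‖ ≤ Fintype.card ι * (A * B) ^ (m + 1) := by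
  set U : ℕ → ι → E := fun i => if Even i then a else fun j => star (a j)
  have hM : ∀ i j, ‖U i j‖ ≤ B := by
    intro i j
    have hnorm : ‖a j‖ ≤ B := by
      calc ‖a j‖ = √‖star (a j) * a j‖ := by
            rw [CStarRing.norm_star_mul_self, Real.sqrt_mul_self (norm_nonneg _)]
        _ ≤ B := (single_le_sum (f := fun k => √‖star (a j) * a k‖)
            (fun k _ => Real.sqrt_nonneg _) (mem_univ j)).trans (hB j)
    by_cases hi : Even i <;> simpa [U, hi] using hnorm
  have hK : ∀ i j, ∑ k, √‖U i j * U (i + 1) k‖ ≤ if Even i then A else B := by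
    intro i j
    by_cases hi : Even i <;> simp [U, hi, Nat.even_add_one, hA, hB]
  have hK₀ : ∀ i, 0 ≤ if Even i then A else B := fun (i : ℕ) => by split_ifs <;> assumption
  have hword := norm_prod_ofFn_sum_le hM hK hK₀ (2 * m + 1)
  rw [prod_range_ite_even] at hword
  have hsums : ∀ i, ∑ j, U i j = if Even i then ∑ j, a j else star (∑ j, a j) := by
    intro i
    by_cases hi : Even i <;> simp [U, hi, star_sum]
  calc _ = ‖(List.ofFn fun i : Fin (2 * m + 1 + 1) => ∑ j, U i j).prod‖ := by
        simp only [hsums]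
        exact congrArg norm (List.prod_ofFn_ite_even _ _ (m + 1)).symm
    _ ≤ _ := hword.trans_eq (by ring)

theorem norm_sum_le_sqrt_mul_of_sum_sqrt_norm_le (hA : ∀ j, ∑ k, √‖a j * star (a k)‖ ≤ A)
    (hB : ∀ j, ∑ k, √‖star (a j) * a k‖ ≤ B) : ‖∑ j, a j‖ ≤ √(A * B) := by
  rcases isEmpty_or_nonempty ι with hι | ⟨⟨j₀⟩⟩
  · simp
  have hA₀ : 0 ≤ A := (sum_nonneg fun k _ => Real.sqrt_nonneg _).trans (hA j₀)
  have hB₀ : 0 ≤ B := (sum_nonneg fun k _ => Real.sqrt_nonneg _).trans (hB j₀)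
  set S := ∑ j, a j
  have hsq : ‖S‖ ^ 2 ≤ A * B := by
    refine le_of_forall_pow_two_pow_le_mul_pow (C := Fintype.card ι) (mul_nonneg hA₀ hB₀)
      fun n => ?_
    obtain ⟨m, hm⟩ : ∃ m, 2 ^ n = m + 1 := Nat.exists_eq_add_one.2 (pow_pos two_pos n)
    calc (‖S‖ ^ 2) ^ 2 ^ n = ‖(S * star S) ^ 2 ^ n‖ := by
          rw [(IsSelfAdjoint.mul_star_self S).norm_pow_two_pow, CStarRing.norm_self_mul_star, sq]
      _ ≤ Fintype.card ι * (A * B) ^ 2 ^ n := by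
          rw [hm]
          exact norm_sum_mul_star_pow_le hA hB hA₀ hB₀ m
  exact (Real.le_sqrt (norm_nonneg _) (mul_nonneg hA₀ hB₀)).2 hsq

end CStarRing

section NormedSpace

variable {ι 𝕜 E F : Type*} [NontriviallyNormedField 𝕜] [NormedAddCommGroup E] [NormedSpace 𝕜 E]
  [NormedAddCommGroup F] [NormedSpace 𝕜 F] {T : ι → E →L[𝕜] F} {C : ℝ}

def summableSubmodule (T : ι → E →L[𝕜] F) : Submodule 𝕜 E where
  carrier := {u | Summable fun j => T j u}
  add_mem' hu hv := by simpa only [Set.mem_ofPred_eq, map_add] using hu.add hv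
  zero_mem' := by simpa only [Set.mem_ofPred_eq, map_zero] using summable_zero
  smul_mem' c u hu := by simpa only [Set.mem_ofPred_eq, map_smul] using hu.const_smul c

theorem isClosed_summableSubmodule [CompleteSpace F] (hC : ∀ s : Finset ι, ‖∑ j ∈ s, T j‖ ≤ C) :
    IsClosed (summableSubmodule T : Set E) := by
  refine isClosed_of_closure_subset fun u hu => summable_iff_vanishing_norm.2 fun ε hε => ?_
  have hC₀ : 0 ≤ C := by simpa using hC ∅
  obtain ⟨v, hv, huv⟩ := Metric.mem_closure_iff.1 hu (ε / (2 * (C + 1))) (by positivity)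
  obtain ⟨s, hs⟩ := summable_iff_vanishing_norm.1 hv (ε / 2) (half_pos hε)
  have hclose : C * ‖u - v‖ ≤ ε / 2 := by
    rw [← dist_eq_norm]
    calc C * dist u v ≤ (C + 1) * (ε / (2 * (C + 1))) :=
          mul_le_mul (by linarith) huv.le dist_nonneg (by linarith)
      _ = ε / 2 := by field_simp
  refine ⟨s, fun t ht => ?_⟩
  calc ‖∑ j ∈ t, T j u‖ = ‖(∑ j ∈ t, T j) (u - v) + ∑ j ∈ t, T j v‖ := by
        simp [_root_.sum_apply]
    _ < ε / 2 + ε / 2 := by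
        refine (norm_add_le _ _).trans_lt (add_lt_add_of_le_of_lt ?_ (hs t ht))
        exact ((∑ j ∈ t, T j).le_opNorm _).trans
          ((mul_le_mul_of_nonneg_right (hC t) (norm_nonneg _)).trans hclose)
    _ = ε := add_halves ε

theorem exists_hasSum_apply_and_norm_le (hsum : ∀ u, Summable fun j => T j u)
    (hC : ∀ s : Finset ι, ‖∑ j ∈ s, T j‖ ≤ C) :
    ∃ S : E →L[𝕜] F, (∀ u, HasSum (fun j => T j u) (S u)) ∧ ‖S‖ ≤ C := by
  have hC₀ : 0 ≤ C := by simpa using hC ∅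
  have hlim : Filter.Tendsto (fun s u => ((∑ j ∈ s, T j : E →L[𝕜] F) : E →ₗ[𝕜] F) u)
      Filter.atTop (nhds fun u => ∑' j, T j u) :=
    tendsto_pi_nhds.2 fun u => by
      simp only [ContinuousLinearMap.coe_coe, FunLike.coe_sum, Finset.sum_apply]
      exact (hsum u).hasSum
  set S₀ := linearMapOfTendsto _ _ hlim
  have hbound : ∀ u, ‖S₀ u‖ ≤ C * ‖u‖ := fun u =>
    le_of_tendsto' (hsum u).hasSum.norm fun s => by
      rw [← _root_.sum_apply]
      exact ((∑ j ∈ s, T j).le_opNorm u).trans (mul_le_mul_of_nonneg_right (hC s) (norm_nonneg _))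
  exact ⟨S₀.mkContinuous C hbound, fun u => (hsum u).hasSum, S₀.mkContinuous_norm_le hC₀ hbound⟩

end NormedSpace

section InnerProductSpace

open ContinuousLinearMap

variable {ι 𝕜 E F : Type*} [RCLike 𝕜] [NormedAddCommGroup E] [InnerProductSpace 𝕜 E]
  [CompleteSpace E] [NormedAddCommGroup F] [InnerProductSpace 𝕜 F] [CompleteSpace F]
  {T : ι → E →L[𝕜] F}

theorem summable_apply_of_summable_apply_adjoint_apply {C : ℝ}
    (hC : ∀ s : Finset ι, ‖∑ j ∈ s, T j‖ ≤ C)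
    (hadj : ∀ k y, Summable fun j => T j (adjoint (T k) y)) (u : E) :
    Summable fun j => T j u := by
  set M := summableSubmodule T
  have : CompleteSpace M := (isClosed_summableSubmodule hC).completeSpace_coe
  have hMperp : Mᗮ = ⊥ := by
    refine (Submodule.eq_bot_iff _).2 fun v hv => ?_
    have hker : ∀ k, T k v = 0 := fun k => by
      have h := (Submodule.mem_orthogonal M v).1 hv _ (hadj k (T k v))
      rwa [adjoint_inner_left, inner_self_eq_zero] at h
    have hvM : v ∈ M := by simp [M, summableSubmodule, hker]
    exact inner_self_eq_zero.1 ((Submodule.mem_orthogonal M v).1 hv v hvM)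
  change u ∈ M
  rw [Submodule.orthogonal_eq_bot_iff.1 hMperp]
  exact Submodule.mem_top

theorem summable_apply_adjoint_apply {A : ℝ}
    (hA : ∀ j, Summable fun k => √‖T j ∘L adjoint (T k)‖)
    (hA' : ∀ j, ∑' k, √‖T j ∘L adjoint (T k)‖ ≤ A) (k : ι) (y : F) :
    Summable fun j => T j (adjoint (T k) y) := by
  refine .of_norm_bounded (((hA k).mul_left A).mul_right ‖y‖) fun j => ?_
  have hsqrt : √‖T k ∘L adjoint (T j)‖ ≤ A :=
    ((hA k).le_tsum j fun i _ => Real.sqrt_nonneg _).trans (hA' k)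
  calc ‖T j (adjoint (T k) y)‖ ≤ ‖T j ∘L adjoint (T k)‖ * ‖y‖ :=
        (T j ∘L adjoint (T k)).le_opNorm y
    _ = √‖T k ∘L adjoint (T j)‖ * √‖T k ∘L adjoint (T j)‖ * ‖y‖ := by
        rw [Real.mul_self_sqrt (norm_nonneg _), ← adjoint.norm_map (T j ∘L adjoint (T k)),
          adjoint_comp, adjoint_adjoint]
    _ ≤ A * √‖T k ∘L adjoint (T j)‖ * ‖y‖ := by gcongr

end InnerProductSpace

/-- **Cotlar–Stein Lemma.** If `(T_j)` are bounded operators on a Hilbert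
space with `A = sup_j Σ_k √‖T_j T_k^*‖ < ∞` and `B = sup_j Σ_k √‖T_j^* T_k‖ < ∞`, then
`Σ_j T_j` converges in the strong operator topology and `‖Σ_j T_j‖ ≤ √(AB)`. -/
theorem cotlar_stein
    {H : Type*} [NormedAddCommGroup H] [InnerProductSpace ℂ H] [CompleteSpace H]
    (T : ℕ → H →L[ℂ] H) (A B : ℝ)
    (hA : ∀ j, Summable fun k => Real.sqrt ‖(T j).comp (ContinuousLinearMap.adjoint (T k))‖)
    (hA' : ∀ j, (∑' k, Real.sqrt ‖(T j).comp (ContinuousLinearMap.adjoint (T k))‖) ≤ A)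
    (hB : ∀ j, Summable fun k => Real.sqrt ‖(ContinuousLinearMap.adjoint (T j)).comp (T k)‖)
    (hB' : ∀ j, (∑' k, Real.sqrt ‖(ContinuousLinearMap.adjoint (T j)).comp (T k)‖) ≤ B) :
    ∃ S : H →L[ℂ] H, (∀ u : H, HasSum (fun j => T j u) (S u)) ∧
      ‖S‖ ≤ Real.sqrt (A * B) := by
  have hpartial : ∀ s : Finset ℕ, ‖∑ j ∈ s, T j‖ ≤ √(A * B) := fun s => by
    rw [← sum_coe_sort]
    refine norm_sum_le_sqrt_mul_of_sum_sqrt_norm_le (fun j => ?_) (fun j => ?_)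
    · exact (sum_coe_sort s _).trans_le
        (((hA j).sum_le_tsum s fun _ _ => Real.sqrt_nonneg _).trans (hA' j))
    · exact (sum_coe_sort s _).trans_le
        (((hB j).sum_le_tsum s fun _ _ => Real.sqrt_nonneg _).trans (hB' j))
  have hsum := summable_apply_of_summable_apply_adjoint_apply hpartial
    (summable_apply_adjoint_apply hA hA')
  exact exists_hasSum_apply_and_norm_le hsum hpartial
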